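/- Let Ŵ and E be independent real random variables, exponentially distributed with means σ̂3² > 0 and σ_{e3}² > 0 respectively, and let P3, N0 > 0. Define Y = Ŵ·P3/(E·P3 + N0), ρ3 = P3·σ̂3²/N0, and κ = σ_{e3}²/σ̂3². Then the law of Y has density f_Y(y) = [ (1/ρ3)·(1 + κ·y)^{−1} + κ·(1 + κ·y)^{−2} ] · exp(−y/ρ3) with respect to Lebesgue measure on [0, ∞). -/

import Mathlib

/-! Given `E = e ≥ 0`, the event `Y ≤ y` is `Ŵ ≤ y (e P3 + N0) / P3`, of probability
`1 - exp (-y / ρ3) * exp (-y e / σ̂3²)`. Averaging over `E` with the Laplace transform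
`𝔼[exp (-b E)] = (1 + σ_{e3}² b)⁻¹` of the exponential law gives the CDF
`F_Y(y) = 1 - exp (-y / ρ3) * (1 + κ y)⁻¹` on `[0, ∞)`, whose derivative is the claimed
density. -/

open MeasureTheory ProbabilityTheory

noncomputable def expMean (a : ℝ) : Measure ℝ :=
  volume.withDensity fun x => ENNReal.ofReal (if 0 ≤ x then (1 / a) * Real.exp (-x / a) else 0)

open Set Real

lemma withDensity_ite_nonneg_Iio_zero (g : ℝ → ℝ) :
    volume.withDensity (fun x => ENNReal.ofReal (if 0 ≤ x then g x else 0)) (Iio 0) = 0 := by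
  rw [withDensity_apply _ measurableSet_Iio]
  refine (setLIntegral_congr_fun measurableSet_Iio fun x hx => ?_).trans lintegral_zero
  rw [if_neg (not_le.2 hx), ENNReal.ofReal_zero]

lemma withDensity_ite_nonneg_Iic_eq_sub {f F : ℝ → ℝ} {y : ℝ} (hy : 0 ≤ y)
    (hF : ∀ x ∈ Icc 0 y, HasDerivAt F (f x) x) (hf : IntegrableOn f (Icc 0 y))
    (hf_nonneg : ∀ x ∈ Icc 0 y, 0 ≤ f x) :
    volume.withDensity (fun x => ENNReal.ofReal (if 0 ≤ x then f x else 0)) (Iic y)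
      = ENNReal.ofReal (F y - F 0) := by
  have hind : (fun x => ENNReal.ofReal (if 0 ≤ x then f x else 0))
      = (Ici 0).indicator fun x => ENNReal.ofReal (f x) := by
    ext x; by_cases hx : 0 ≤ x <;> simp [hx]
  rw [withDensity_apply _ measurableSet_Iic, hind, lintegral_indicator measurableSet_Ici,
    Measure.restrict_restrict measurableSet_Ici, Ici_inter_Iic,
    ← ofReal_integral_eq_lintegral_ofReal hf
      ((ae_restrict_iff' measurableSet_Icc).2 (.of_forall hf_nonneg)),
    integral_Icc_eq_integral_Ioc, ← intervalIntegral.integral_of_le hy,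
    intervalIntegral.integral_eq_sub_of_hasDerivAt (by rwa [uIcc_of_le hy])
      ((intervalIntegrable_iff_integrableOn_Icc_of_le hy).2 hf)]

lemma ext_of_Iic_of_Iio_eq_zero {μ ν : Measure ℝ} [IsFiniteMeasure μ] (hμ : μ (Iio 0) = 0)
    (hν : ν (Iio 0) = 0) (h : ∀ y, 0 ≤ y → μ (Iic y) = ν (Iic y)) : μ = ν := by
  refine Measure.ext_of_Iic μ ν fun y => (le_or_gt 0 y).elim (h y) fun hy => ?_
  rw [measure_mono_null (Iic_subset_Iio.2 hy) hμ, measure_mono_null (Iic_subset_Iio.2 hy) hν]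

section ExpMean

variable {a : ℝ}

lemma expMean_eq_expMeasure : expMean a = expMeasure a⁻¹ := by
  rw [expMean, expMeasure, gammaMeasure]
  congr with x
  change _ = exponentialPDF a⁻¹ x
  rw [exponentialPDF_eq]
  congr 2
  rw [one_div, div_eq_inv_mul, neg_mul_eq_mul_neg]

lemma isProbabilityMeasure_expMean (ha : 0 < a) : IsProbabilityMeasure (expMean a) := by
  rw [expMean_eq_expMeasure]
  exact isProbabilityMeasure_expMeasure (inv_pos.2 ha)

lemma expMean_Iic (ha : 0 < a) (c : ℝ) :
    expMean a (Iic c) = ENNReal.ofReal (1 - exp (-c / a)) := by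
  have := isProbabilityMeasure_expMean ha
  rw [← ofReal_cdf, expMean_eq_expMeasure, cdf_expMeasure_eq (inv_pos.2 ha)]
  split_ifs with hc
  · rw [neg_div, div_eq_inv_mul]
  · rw [ENNReal.ofReal_zero, ENNReal.ofReal_of_nonpos]
    simp only [sub_nonpos, one_le_exp_iff]
    exact div_nonneg (by linarith) ha.le

lemma ae_nonneg_expMean : ∀ᵐ x ∂expMean a, 0 ≤ x :=
  (measure_eq_zero_iff_ae_notMem.1 (withDensity_ite_nonneg_Iio_zero _)).mono
    fun _ hx => not_lt.1 hx

lemma integral_expMean (ha : 0 ≤ a) (f : ℝ → ℝ) :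
    ∫ x, f x ∂expMean a = ∫ x in Ioi 0, (1 / a) * exp (-x / a) * f x := by
  rw [expMean, integral_withDensity_eq_integral_toReal_smul
    ((Measurable.ite measurableSet_Ici (by fun_prop) measurable_const).ennreal_ofReal)
    (.of_forall fun _ => ENNReal.ofReal_lt_top), ← integral_Ici_eq_integral_Ioi,
    ← integral_indicator measurableSet_Ici]
  congr with x
  by_cases hx : 0 ≤ x
  · simpa [hx] using Or.inl (by positivity)
  · simp [hx]

lemma integral_exp_neg_mul_expMean (ha : 0 < a) {b : ℝ} (hb : 0 < a⁻¹ + b) :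
    ∫ x, exp (-(b * x)) ∂expMean a = (1 + a * b)⁻¹ := by
  have hexp : ∀ x, 1 / a * exp (-x / a) * exp (-(b * x)) = a⁻¹ * exp (-(a⁻¹ + b) * x) := by
    intro x
    rw [one_div, mul_assoc, ← exp_add]
    ring_nf
  simp_rw [integral_expMean ha.le, hexp, integral_const_mul,
    integral_exp_mul_Ioi (neg_lt_zero.2 hb), mul_zero, exp_zero]
  field_simp

end ExpMean

lemma ProbabilityTheory.IndepFun.map_comp_prodMk {Ω α β γ : Type*} [MeasurableSpace Ω]
    [MeasurableSpace α] [MeasurableSpace β] [MeasurableSpace γ] {P : Measure Ω}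
    [IsFiniteMeasure P] {X : Ω → α} {Y : Ω → β} (hXY : IndepFun X Y P)
    (hX : AEMeasurable X P) (hY : AEMeasurable Y P)
    {g : α × β → γ} (hg : Measurable g) :
    P.map (fun ω => g (X ω, Y ω)) = ((P.map X).prod (P.map Y)).map g := by
  rw [← hXY.map_prod_eq_prod_map_map hX hY,
    AEMeasurable.map_map_of_aemeasurable hg.aemeasurable (hX.prodMk hY)]
  rfl

noncomputable def relaySINR (P3 N0 : ℝ) (p : ℝ × ℝ) : ℝ := p.1 * P3 / (p.2 * P3 + N0)

noncomputable def relaySINRCDF (ρ κ y : ℝ) : ℝ := 1 - exp (-y / ρ) * (1 + κ * y)⁻¹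

section RelaySINR

variable {σh σe P3 N0 : ℝ}

lemma measurable_relaySINR : Measurable (relaySINR P3 N0) := by
  unfold relaySINR; fun_prop

lemma relaySINR_nonneg {p : ℝ × ℝ} (h1 : 0 ≤ p.1) (h2 : 0 ≤ p.2) (hP3 : 0 ≤ P3)
    (hN0 : 0 ≤ N0) :
    0 ≤ relaySINR P3 N0 p := by
  unfold relaySINR; positivity

lemma relaySINR_le_iff {w e y : ℝ} (hP3 : 0 < P3) (hd : 0 < e * P3 + N0) :
    relaySINR P3 N0 (w, e) ≤ y ↔ w ≤ y * (e * P3 + N0) / P3 := by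
  rw [relaySINR, div_le_iff₀ hd, le_div_iff₀ hP3]

lemma map_relaySINR_Iio_zero (hP3 : 0 ≤ P3) (hN0 : 0 ≤ N0) :
    ((expMean σh).prod (expMean σe)).map (relaySINR P3 N0) (Iio 0) = 0 := by
  rw [Measure.map_apply measurable_relaySINR measurableSet_Iio, measure_eq_zero_iff_ae_notMem]
  filter_upwards [Measure.quasiMeasurePreserving_fst.ae ae_nonneg_expMean,
    Measure.quasiMeasurePreserving_snd.ae ae_nonneg_expMean] with p h1 h2
  exact not_lt.2 (relaySINR_nonneg h1 h2 hP3 hN0)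

lemma map_relaySINR_Iic (hσh : 0 < σh) (hσe : 0 < σe) (hP3 : 0 < P3) (hN0 : 0 < N0) {y : ℝ}
    (hy : 0 ≤ y) :
    ((expMean σh).prod (expMean σe)).map (relaySINR P3 N0) (Iic y)
      = ENNReal.ofReal (relaySINRCDF (P3 * σh / N0) (σe / σh) y) := by
  have := isProbabilityMeasure_expMean hσh
  have := isProbabilityMeasure_expMean hσe
  set C := exp (-y / (P3 * σh / N0)) with C_def
  set b := y / σh with b_def
  have hslice : ∀ᵐ e ∂expMean σe,
      expMean σh ((fun w => (w, e)) ⁻¹' (relaySINR P3 N0 ⁻¹' Iic y))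
        = ENNReal.ofReal (1 - C * exp (-(b * e))) := by
    filter_upwards [ae_nonneg_expMean] with e he
    have hd : 0 < e * P3 + N0 := by positivity
    have hset : (fun w => (w, e)) ⁻¹' (relaySINR P3 N0 ⁻¹' Iic y)
        = Iic (y * (e * P3 + N0) / P3) :=
      ext fun w => relaySINR_le_iff hP3 hd
    rw [hset, expMean_Iic hσh, ← exp_add]
    congr 3
    rw [b_def]
    field_simp
    ring
  have hbound : ∀ᵐ e ∂expMean σe, exp (-(b * e)) ≤ 1 := by
    filter_upwards [ae_nonneg_expMean] with e he
    exact exp_le_one_iff.2 (neg_nonpos.2 (by positivity))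
  have hint : Integrable (fun e => exp (-(b * e))) (expMean σe) :=
    .of_bound (by fun_prop) 1 (hbound.mono fun e he => by rwa [norm_of_nonneg (exp_nonneg _)])
  have hC : C ≤ 1 := exp_le_one_iff.2 (by rw [neg_div]; exact neg_nonpos.2 (by positivity))
  rw [Measure.map_apply measurable_relaySINR measurableSet_Iic,
    Measure.prod_apply_symm (measurable_relaySINR measurableSet_Iic), lintegral_congr_ae hslice,
    ← ofReal_integral_eq_lintegral_ofReal (f := fun e => 1 - C * exp (-(b * e)))
      ((integrable_const 1).sub (hint.const_mul C))
      (hbound.mono fun e he => sub_nonneg.2 (mul_le_one₀ hC (exp_nonneg _) he)),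
    integral_sub (integrable_const 1) (hint.const_mul C), integral_const_mul,
    integral_exp_neg_mul_expMean hσe (by positivity), integral_const, probReal_univ, one_smul,
    relaySINRCDF, C_def, b_def]
  congr 4
  ring

lemma hasDerivAt_relaySINRCDF {ρ κ x : ℝ} (hx : 1 + κ * x ≠ 0) :
    HasDerivAt (relaySINRCDF ρ κ)
      (((1 / ρ) * (1 + κ * x)⁻¹ + κ * ((1 + κ * x) ^ 2)⁻¹) * exp (-x / ρ)) x := by
  have hexp : HasDerivAt (fun t => exp (-t / ρ)) (exp (-x / ρ) * (-1 / ρ)) x :=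
    ((hasDerivAt_neg x).div_const ρ).exp
  have hinv : HasDerivAt (fun t => (1 + κ * t)⁻¹) (-κ / (1 + κ * x) ^ 2) x := by
    have hlin : HasDerivAt (fun t => 1 + κ * t) κ x := by
      simpa using ((hasDerivAt_id x).const_mul κ).const_add 1
    exact hlin.inv hx
  refine ((hexp.mul hinv).const_sub 1).congr_deriv ?_
  field_simp
  ring

end RelaySINR

/-- density formula (20): with `W = |ĥ3|²` and `E = |e3|²`
independent exponentials of means `σh3 = σ̂3²`, `σe3 = σ_{e3}²`, the law of
`Y = W·P3/(E·P3 + N0)` has density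
`f_Y(y) = [(1/ρ3)·(1 + κ·y)⁻¹ + κ·(1 + κ·y)⁻²]·exp(−y/ρ3)` with respect to
Lebesgue measure on `[0, ∞)`, where `ρ3 = P3·σ̂3²/N0` and `κ = σe3/σh3`. -/
theorem stmt_5 {Ω : Type*} [MeasurableSpace Ω] (P : Measure Ω) [IsProbabilityMeasure P]
    (W E : Ω → ℝ) (σh3 σe3 P3 N0 : ℝ)
    (hσh3 : 0 < σh3) (hσe3 : 0 < σe3) (hP3 : 0 < P3) (hN0 : 0 < N0)
    (hind : IndepFun W E P)
    (hW : P.map W = expMean σh3) (hE : P.map E = expMean σe3)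
    (ρ3 κ : ℝ) (hρ3 : ρ3 = P3 * σh3 / N0) (hκ : κ = σe3 / σh3) :
    P.map (fun ω => W ω * P3 / (E ω * P3 + N0)) =
      volume.withDensity fun y => ENNReal.ofReal (if 0 ≤ y then
        ((1 / ρ3) * (1 + κ * y)⁻¹ + κ * ((1 + κ * y) ^ 2)⁻¹) * Real.exp (-y / ρ3)
        else 0) := by
  subst hρ3 hκ
  have := isProbabilityMeasure_expMean hσh3
  have := isProbabilityMeasure_expMean hσe3
  have hWm : AEMeasurable W P := .of_map_ne_zero (hW ▸ IsProbabilityMeasure.ne_zero _)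
  have hEm : AEMeasurable E P := .of_map_ne_zero (hE ▸ IsProbabilityMeasure.ne_zero _)
  have hlaw : P.map (fun ω => W ω * P3 / (E ω * P3 + N0))
      = ((expMean σh3).prod (expMean σe3)).map (relaySINR P3 N0) := by
    rw [← hW, ← hE]
    exact hind.map_comp_prodMk hWm hEm measurable_relaySINR
  rw [hlaw]
  refine ext_of_Iic_of_Iio_eq_zero (map_relaySINR_Iio_zero hP3.le hN0.le)
    (withDensity_ite_nonneg_Iio_zero _) fun y hy => ?_
  rw [map_relaySINR_Iic hσh3 hσe3 hP3 hN0 hy, withDensity_ite_nonneg_Iic_eq_sub hy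
    (fun x hx => hasDerivAt_relaySINRCDF (by have := hx.1; positivity))
    (ContinuousOn.integrableOn_Icc fun x hx => by
      have := hx.1
      exact ContinuousAt.continuousWithinAt (by fun_prop (disch := positivity)))
    (fun x hx => by have := hx.1; positivity)]
  simp [relaySINRCDF]
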